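/- Generalized Pythagorean inequality for Bregman projection: let ψ : ℝ^p → ℝ be continuously differentiable and strictly convex, let D_ψ(z,β) = ψ(z) − ψ(β) − ⟨z − β, ∇ψ(β)⟩ be the associated Bregman divergence, let C ⊆ ℝ^p be a nonempty convex set, let β ∈ ℝ^p, and suppose ẑ ∈ C minimizes z ↦ D_ψ(z,β) over C. Then for every z ∈ C, D_ψ(z,β) ≥ D_ψ(z,ẑ) + D_ψ(ẑ,β). -/

import Mathlib

/-!
The three-point identity `D(z, β) = D(z, ẑ) + D(ẑ, β) + ⟪z - ẑ, ∇ψ(ẑ) - ∇ψ(β)⟫` reduces the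
inequality to `0 ≤ ⟪z - ẑ, ∇ψ(ẑ) - ∇ψ(β)⟫`. Since `∇ψ(ẑ) - ∇ψ(β)` is the gradient of
`D(·, β)` at `ẑ`, this is the first-order optimality condition for the minimiser `ẑ` of
`D(·, β)` over the convex set `C`.
-/

open scoped RealInnerProductSpace

/-- The Bregman divergence `D_ψ(z, b) = ψ(z) − ψ(b) − ⟪z − b, ∇ψ(b)⟫` generated by a
differentiable function `ψ : ℝ^p → ℝ`. -/
noncomputable def bregmanDiv (p : ℕ) (ψ : EuclideanSpace ℝ (Fin p) → ℝ)
    (z b : EuclideanSpace ℝ (Fin p)) : ℝ :=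
  ψ z - ψ b - ⟪z - b, gradient ψ b⟫

theorem IsMinOn.inner_sub_gradient_nonneg {E : Type*} [NormedAddCommGroup E]
    [InnerProductSpace ℝ E] [CompleteSpace E] {f : E → ℝ} {s : Set E} {a y f' : E}
    (h : IsMinOn f s a) (hs : Convex ℝ s) (ha : a ∈ s) (hy : y ∈ s)
    (hf : HasGradientWithinAt f f' s a) : 0 ≤ ⟪y - a, f'⟫ := by
  rw [real_inner_comm]
  exact h.localize.hasFDerivWithinAt_nonneg hf.hasFDerivWithinAt
    (sub_mem_posTangentConeAt_of_segment_subset (hs.segment_subset ha hy))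

section Bregman

variable {p : ℕ} {ψ : EuclideanSpace ℝ (Fin p) → ℝ}

theorem bregmanDiv_add_bregmanDiv (x y z : EuclideanSpace ℝ (Fin p)) :
    bregmanDiv p ψ z y + bregmanDiv p ψ y x =
      bregmanDiv p ψ z x - ⟪z - y, gradient ψ y - gradient ψ x⟫ := by
  have hzx : z - x = (z - y) + (y - x) := by abel
  simp only [bregmanDiv, hzx, inner_add_left, inner_sub_right]
  ring

theorem hasGradientAt_bregmanDiv {x : EuclideanSpace ℝ (Fin p)} (hψ : DifferentiableAt ℝ ψ x)
    (b : EuclideanSpace ℝ (Fin p)) :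
    HasGradientAt (bregmanDiv p ψ · b) (gradient ψ x - gradient ψ b) x := by
  rw [hasGradientAt_iff_hasFDerivAt, map_sub]
  have hlin : HasFDerivAt (fun z => ⟪z - b, gradient ψ b⟫)
      (InnerProductSpace.toDual ℝ _ (gradient ψ b)) x := by
    have hform : (fun z => ⟪z - b, gradient ψ b⟫) =
        fun z => InnerProductSpace.toDual ℝ _ (gradient ψ b) z - ⟪gradient ψ b, b⟫ := by
      ext z
      rw [InnerProductSpace.toDual_apply_apply, inner_sub_left, real_inner_comm z,
        real_inner_comm b]
    rw [hform]
    exact (InnerProductSpace.toDual ℝ _ (gradient ψ b)).hasFDerivAt.sub_const _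
  exact (hψ.hasGradientAt.hasFDerivAt.sub_const (ψ b)).sub hlin

end Bregman

theorem bregman_pythagorean_inequality_general (p : ℕ)
    (ψ : EuclideanSpace ℝ (Fin p) → ℝ)
    (hψdiff : ContDiff ℝ 1 ψ)
    (C : Set (EuclideanSpace ℝ (Fin p))) (hCconv : Convex ℝ C)
    (β : EuclideanSpace ℝ (Fin p))
    (zhat : EuclideanSpace ℝ (Fin p)) (hzhat : zhat ∈ C)
    (hmin : ∀ z ∈ C, bregmanDiv p ψ zhat β ≤ bregmanDiv p ψ z β) :
    ∀ z ∈ C, bregmanDiv p ψ z zhat + bregmanDiv p ψ zhat β ≤ bregmanDiv p ψ z β := by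
  intro z hz
  have hzhat_min : IsMinOn (bregmanDiv p ψ · β) C zhat := isMinOn_iff.mpr hmin
  have hgrad := hasGradientAt_bregmanDiv (hψdiff.differentiable one_ne_zero zhat) β
  have hfirst_order := hzhat_min.inner_sub_gradient_nonneg hCconv hzhat hz
    hgrad.hasFDerivAt.hasFDerivWithinAt
  rw [bregmanDiv_add_bregmanDiv]
  linarith

/-- **Generalized Pythagorean inequality for Bregman projection.**
Let `ψ : ℝ^p → ℝ` be continuously differentiable and strictly convex, let
`D_ψ(z,β) = ψ(z) − ψ(β) − ⟪z − β, ∇ψ(β)⟫` be the associated Bregman divergence, let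
`C ⊆ ℝ^p` be a nonempty convex set, let `β ∈ ℝ^p`, and suppose `ẑ ∈ C` minimizes
`z ↦ D_ψ(z,β)` over `C` (the Bregman projection of `β` onto `C`).  Then for every `z ∈ C`,
`D_ψ(z,β) ≥ D_ψ(z,ẑ) + D_ψ(ẑ,β)`. -/
theorem bregman_pythagorean_inequality (p : ℕ)
    (ψ : EuclideanSpace ℝ (Fin p) → ℝ)
    (hψdiff : ContDiff ℝ 1 ψ)
    (hψstrict : StrictConvexOn ℝ Set.univ ψ)
    (C : Set (EuclideanSpace ℝ (Fin p))) (hCne : C.Nonempty) (hCconv : Convex ℝ C)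
    (β : EuclideanSpace ℝ (Fin p))
    (zhat : EuclideanSpace ℝ (Fin p)) (hzhat : zhat ∈ C)
    (hmin : ∀ z ∈ C, bregmanDiv p ψ zhat β ≤ bregmanDiv p ψ z β) :
    ∀ z ∈ C, bregmanDiv p ψ z zhat + bregmanDiv p ψ zhat β ≤ bregmanDiv p ψ z β :=
  bregman_pythagorean_inequality_general p ψ hψdiff C hCconv β zhat hzhat hmin
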